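/- Let X and U be nonempty sets, let f : X → U → X define the discrete-time system x(k+1) = f(x(k), u(k)), and suppose the system is T_d-controllable for some positive integer T_d. Let Z̃ be a nonempty compact subset of the metric space X × U and let D_I = {z̃_1, …, z̃_M} ⊆ X × U be M anchor points whose fill distance with respect to Z̃ is at most ε > 0. Let κ be a strictly positive definite kernel on X × U, fix an initial state x₀ ∈ X, and fix N ≥ M·(T_d + 1). For each input sequence u : {0,…,N−1} → U let S(u) denote the (finite) set of joint points {(x(j), u(j)) : 0 ≤ j ≤ N−1} of the resulting trajectory with x(0) = x₀, and let V(S(u)) = (1/M)·Σ_{i=1}^{M} Var(z̃_i ; S(u)) be the average GP posterior variance at the anchor points. Then: for any input sequence u* minimizing V(S(u)) over all input sequences u : {0,…,N−1} → U, every anchor point z̃_i belongs to S(u*), and consequently the fill distance of S(u*) with respect to Z̃ is at most ε. -/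

import Mathlib

/-!
By controllability one input sequence of length `M (T_d + 1)` visits every anchor point: steer
to the state of the next anchor in at most `T_d` steps, then apply its input. The posterior
variance vanishes at data points and is positive elsewhere, being the Gram quadratic form of a
strictly positive definite kernel at a nonzero vector. Hence the minimal average variance is
`0`, so a minimiser's dataset contains every anchor, and adding points cannot increase the fill
distance.
-/

open Matrix
open scoped Classical

/-- A strictly positive definite kernel: every Gram matrix built from pairwise-distinct
points is positive definite. -/
def IsStrictlyPDKernel {Z : Type*} (κ : Z → Z → ℝ) : Prop :=
  ∀ (n : ℕ) (z : Fin n → Z), Function.Injective z →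
    (Matrix.of fun i j => κ (z i) (z j)).PosDef

/-- GP posterior variance at a query point `zq`, given the (pairwise-distinct) data points
in the finite set `S`: `κ(z̃,z̃) − k K⁻¹ kᵀ` with `K` the Gram matrix of `S` and `k` the
vector of kernel evaluations between `zq` and the points of `S`. -/
noncomputable def postVar {Z : Type*} (κ : Z → Z → ℝ) (S : Finset Z) (zq : Z) : ℝ :=
  κ zq zq -
    (fun i : S => κ zq (i : Z)) ⬝ᵥ
      ((Matrix.of fun i j : S => κ (i : Z) (j : Z))⁻¹ *ᵥ fun i : S => κ zq (i : Z))

/-- Fill distance of a finite set `D` with respect to the region of interest `Zt`: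
`ρ(D) = sup_{ς ∈ Zt} min_{z ∈ D} dist(ς, z)`. -/
noncomputable def fillDist {Z : Type*} [MetricSpace Z] (Zt : Set Z) (D : Finset Z) : ℝ :=
  ⨆ ς : Zt, ⨅ z : D, dist (ς : Z) (z : Z)

/-- Trajectory of the discrete-time system `x(k+1) = f(x(k), u(k))` starting at `x0`. -/
def traj {X U : Type*} (f : X → U → X) (x0 : X) (u : ℕ → U) : ℕ → X
  | 0 => x0
  | k + 1 => f (traj f x0 u k) (u k)

/-- `Td`-controllability: any state can be driven to any other state in at most `Td`
(and at least one) steps by a suitable input sequence. -/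
def Controllable {X U : Type*} (f : X → U → X) (Td : ℕ) : Prop :=
  ∀ x1 x2 : X, ∃ T : ℕ, 1 ≤ T ∧ T ≤ Td ∧ ∃ u : ℕ → U, traj f x1 u T = x2

/-- Generated dataset: the set of joint input-state points `{(x(j), u(j)) : 0 ≤ j ≤ N−1}`
of the trajectory with `x(0) = x0`. -/
noncomputable def dataset {X U : Type*} (f : X → U → X) (x0 : X) (u : ℕ → U) (N : ℕ) :
    Finset (X × U) :=
  Finset.image (fun j => (traj f x0 u j, u j)) (Finset.range N)

namespace IsStrictlyPDKernel

variable {Z : Type*} {κ : Z → Z → ℝ}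

theorem symm (hκ : IsStrictlyPDKernel κ) (a b : Z) : κ a b = κ b a := by
  rcases eq_or_ne a b with rfl | hab
  · rfl
  · have hinj : Function.Injective ![a, b] := by
      intro i j hij
      fin_cases i <;> fin_cases j <;> simp_all [eq_comm]
    simpa using ((hκ 2 ![a, b] hinj).1.apply 0 1).symm

theorem posDef_gram (hκ : IsStrictlyPDKernel κ) {ι : Type*} [Fintype ι] {z : ι → Z}
    (hz : Function.Injective z) : (Matrix.of fun i j => κ (z i) (z j)).PosDef := by
  let e := Fintype.equivFin ι
  have h := hκ _ (z ∘ e.symm) (hz.comp e.symm.injective)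
  have hreindex : (Matrix.of fun i j => κ (z i) (z j))
      = (Matrix.of fun i j => κ ((z ∘ e.symm) i) ((z ∘ e.symm) j)).submatrix e e := by
    ext i j; simp
  rw [hreindex]
  exact h.submatrix e.injective

end IsStrictlyPDKernel

section PosteriorVariance

variable {Z : Type*} {κ : Z → Z → ℝ}

theorem postVar_eq_zero_of_mem (hκ : IsStrictlyPDKernel κ) {S : Finset Z} {zq : Z}
    (h : zq ∈ S) : postVar κ S zq = 0 := by
  set K : Matrix S S ℝ := Matrix.of fun i j : S => κ (i : Z) (j : Z) with hK
  have hdet : IsUnit K.det := (hκ.posDef_gram Subtype.coe_injective).det_pos.ne'.isUnit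
  -- the data vector of a point of `S` is the corresponding column of the Gram matrix
  have hcol : (fun i : S => κ zq (i : Z)) = K *ᵥ Pi.single ⟨zq, h⟩ 1 := by
    funext i
    simp [hK, hκ.symm zq]
  rw [postVar, hcol, Matrix.mulVec_mulVec, Matrix.nonsing_inv_mul _ hdet, Matrix.one_mulVec,
    dotProduct_single, Matrix.mulVec_single]
  simp [hK]

/-- The posterior variance is the Gram quadratic form of the points `zq, S` evaluated at
`(1, -K⁻¹ k)`, hence positive when `zq ∉ S`. -/
theorem postVar_pos_of_notMem (hκ : IsStrictlyPDKernel κ) {S : Finset Z} {zq : Z}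
    (h : zq ∉ S) : 0 < postVar κ S zq := by
  set K : Matrix S S ℝ := Matrix.of fun i j : S => κ (i : Z) (j : Z) with hK
  have hdet : IsUnit K.det := (hκ.posDef_gram Subtype.coe_injective).det_pos.ne'.isUnit
  set k : S → ℝ := fun i => κ zq (i : Z) with hk
  set α : S → ℝ := K⁻¹ *ᵥ k with hα
  have hKα : K *ᵥ α = k := by
    rw [hα, Matrix.mulVec_mulVec, Matrix.mul_nonsing_inv _ hdet, Matrix.one_mulVec]
  let p : Option S → Z := fun o => o.elim zq (↑)
  have hp : Function.Injective p := by
    rintro (_ | i) (_ | j) hij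
    · rfl
    · exact absurd (show zq = j from hij) fun e => h (e ▸ j.2)
    · exact absurd (show (i : Z) = zq from hij) fun e => h (e ▸ i.2)
    · exact congrArg some (Subtype.ext hij)
  let x : Option S → ℝ := fun o => o.elim 1 (-α ·)
  have hx : x ≠ 0 := fun h0 => by simpa [x] using congrFun h0 none
  have hGx : (Matrix.of fun i j => κ (p i) (p j)) *ᵥ x = Pi.single none (postVar κ S zq) := by
    funext o
    cases o with
    | none =>
      simp [Matrix.mulVec, dotProduct, Fintype.sum_option, p, x, postVar, hK, hk, hα,
        sub_eq_add_neg]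
    | some i =>
      have hi := congrFun hKα i
      simp only [Matrix.mulVec, dotProduct, hK, hk, Matrix.of_apply] at hi
      simp only [Matrix.mulVec, dotProduct, Fintype.sum_option, p, x, Matrix.of_apply,
        Option.elim, mul_one, mul_neg, Finset.sum_neg_distrib, hi, hκ.symm zq]
      simp
  simpa [hGx, x] using (hκ.posDef_gram hp).dotProduct_mulVec_pos hx

theorem postVar_nonneg (hκ : IsStrictlyPDKernel κ) (S : Finset Z) (zq : Z) :
    0 ≤ postVar κ S zq := by
  by_cases h : zq ∈ S
  · exact (postVar_eq_zero_of_mem hκ h).ge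
  · exact (postVar_pos_of_notMem hκ h).le

theorem mem_of_sum_postVar_nonpos (hκ : IsStrictlyPDKernel κ) {ι : Type*} [Fintype ι]
    {S : Finset Z} {a : ι → Z} (hsum : ∑ i, postVar κ S (a i) ≤ 0) (i : ι) : a i ∈ S := by
  have hzero := (Finset.sum_eq_zero_iff_of_nonneg fun i _ => postVar_nonneg hκ S (a i)).1
    (hsum.antisymm (Finset.sum_nonneg fun i _ => postVar_nonneg hκ S (a i)))
  by_contra hi
  exact (postVar_pos_of_notMem hκ hi).ne' (hzero i (Finset.mem_univ i))

end PosteriorVariance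

section Trajectories

variable {X U : Type*} {f : X → U → X}

theorem traj_congr (x0 : X) {u v : ℕ → U} {n : ℕ} (h : ∀ k < n, u k = v k) :
    traj f x0 u n = traj f x0 v n := by
  induction n with
  | zero => rfl
  | succ n ih =>
    simp only [traj, ih fun k hk => h k (by omega), h n (by omega)]

theorem traj_add (x0 : X) (u : ℕ → U) (t k : ℕ) :
    traj f x0 u (t + k) = traj f (traj f x0 u t) (fun j => u (t + j)) k := by
  induction k with
  | zero => rfl
  | succ k ih => rw [← add_assoc, traj, ih, traj]

theorem mem_dataset {x0 : X} {u : ℕ → U} {N : ℕ} {z : X × U} :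
    z ∈ dataset f x0 u N ↔ ∃ j < N, (traj f x0 u j, u j) = z := by
  simp [dataset]

theorem dataset_mono (x0 : X) (u : ℕ → U) {N N' : ℕ} (h : N ≤ N') :
    dataset f x0 u N ⊆ dataset f x0 u N' :=
  Finset.image_subset_image (Finset.range_subset_range.2 h)

/-- Steer to `p.1` within `Td` steps, apply the input `p.2`, then visit the remaining points
from the state `f p.1 p.2`: each point costs at most `Td + 1` steps. -/
theorem Controllable.exists_subset_dataset [Nonempty U] {Td : ℕ} (hctrl : Controllable f Td)
    (x0 : X) (s : Finset (X × U)) : ∃ u, s ⊆ dataset f x0 u (s.card * (Td + 1)) := by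
  induction s using Finset.induction_on generalizing x0 with
  | empty => exact ⟨fun _ => Classical.arbitrary U, Finset.empty_subset _⟩
  | insert p s hp ih =>
    obtain ⟨T, -, hT, v, hv⟩ := hctrl x0 p.1
    obtain ⟨w, hw⟩ := ih (f p.1 p.2)
    let u : ℕ → U := fun k => if k < T then v k else if k = T then p.2 else w (k - (T + 1))
    have hu_T : u T = p.2 := by simp [u]
    have htraj_T : traj f x0 u T = p.1 := hv ▸ traj_congr x0 fun k hk => by simp [u, hk]
    have htail : (fun j => u (T + 1 + j)) = w := by
      funext j
      simp [u, show ¬T + 1 + j < T by omega, show T + 1 + j ≠ T by omega]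
    have htraj_tail (j : ℕ) : traj f x0 u (T + 1 + j) = traj f (f p.1 p.2) w j := by
      rw [traj_add, htail, traj, htraj_T, hu_T]
    refine ⟨u, fun q hq => ?_⟩
    rw [Finset.card_insert_of_notMem hp, mem_dataset]
    rcases Finset.mem_insert.1 hq with rfl | hq
    · exact ⟨T, by nlinarith, by rw [htraj_T, hu_T]⟩
    · obtain ⟨j, hj, rfl⟩ := mem_dataset.1 (hw hq)
      refine ⟨T + 1 + j, by nlinarith, ?_⟩
      rw [htraj_tail, show u (T + 1 + j) = w j from congrFun htail j]

end Trajectories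

theorem fillDist_le_fillDist_of_subset {Z : Type*} [MetricSpace Z] {Zt : Set Z}
    (hZt : Bornology.IsBounded Zt) {D D' : Finset Z} (hD' : D'.Nonempty) (h : D' ⊆ D) :
    fillDist Zt D ≤ fillDist Zt D' := by
  obtain ⟨z₀, hz₀⟩ := hD'
  obtain ⟨r, hr⟩ := (Metric.isBounded_iff_subset_closedBall z₀).1 hZt
  have : Nonempty D' := ⟨⟨z₀, hz₀⟩⟩
  have hbdd (ς : Z) (E : Finset Z) : BddBelow (Set.range fun z : E => dist ς z) :=
    ⟨0, by rintro _ ⟨z, rfl⟩; exact dist_nonneg⟩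
  refine ciSup_mono ⟨r, ?_⟩ fun ς =>
    ciInf_mono_of_forall_exists (hbdd ς D) fun z => ⟨⟨z, h z.2⟩, le_rfl⟩
  rintro _ ⟨ς, rfl⟩
  exact ciInf_le_of_le (hbdd ς D') ⟨z₀, hz₀⟩ (hr ς.2)

theorem statement0_general {X U : Type*} [MetricSpace X] [MetricSpace U] [Nonempty U]
    (f : X → U → X) (Td : ℕ) (hctrl : Controllable f Td)
    (Zt : Set (X × U)) (hZt_cpt : IsCompact Zt)
    {M : ℕ} (hM : 0 < M) (anchors : Fin M → X × U)
    (ε : ℝ)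
    (hfill : fillDist Zt (Finset.image anchors Finset.univ) ≤ ε)
    (κ : X × U → X × U → ℝ) (hκ : IsStrictlyPDKernel κ)
    (x0 : X) (N : ℕ) (hN : M * (Td + 1) ≤ N)
    (ustar : ℕ → U)
    (hopt : ∀ u : ℕ → U,
      (1 / (M : ℝ)) * ∑ i, postVar κ (dataset f x0 ustar N) (anchors i) ≤
        (1 / (M : ℝ)) * ∑ i, postVar κ (dataset f x0 u N) (anchors i)) :
    (∀ i, anchors i ∈ dataset f x0 ustar N) ∧
      fillDist Zt (dataset f x0 ustar N) ≤ ε := by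
  set A := Finset.image anchors Finset.univ
  obtain ⟨u, hu⟩ := hctrl.exists_subset_dataset x0 A
  have hvisit (i : Fin M) : anchors i ∈ dataset f x0 u N := by
    have hcard : A.card * (Td + 1) ≤ N :=
      le_trans (by gcongr; simpa using Finset.card_image_le (s := Finset.univ) (f := anchors)) hN
    exact dataset_mono x0 u hcard (hu (Finset.mem_image_of_mem _ (Finset.mem_univ i)))
  have hmem : ∀ i, anchors i ∈ dataset f x0 ustar N := by
    refine mem_of_sum_postVar_nonpos hκ
      (nonpos_of_mul_nonpos_right ?_ (one_div_pos.2 (Nat.cast_pos.2 hM)))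
    simpa [postVar_eq_zero_of_mem hκ (hvisit _)] using hopt u
  refine ⟨hmem, le_trans ?_ hfill⟩
  exact fillDist_le_fillDist_of_subset hZt_cpt.isBounded ⟨anchors ⟨0, hM⟩, by simp [A]⟩
    (Finset.image_subset_iff.2 fun i _ => hmem i)

/-- For a `Td`-controllable system, anchors with fill distance at most `ε`
w.r.t. a nonempty compact region of interest, a strictly positive definite kernel, and
`N ≥ M·(Td+1)`: any input sequence minimizing the average GP posterior variance at the
anchor points yields a dataset containing every anchor point, whose fill distance w.r.t.
the region of interest is at most `ε`. -/
theorem statement0 {X U : Type*} [MetricSpace X] [MetricSpace U] [Nonempty X] [Nonempty U]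
    (f : X → U → X) (Td : ℕ) (hTd : 0 < Td) (hctrl : Controllable f Td)
    (Zt : Set (X × U)) (hZt_ne : Zt.Nonempty) (hZt_cpt : IsCompact Zt)
    {M : ℕ} (hM : 0 < M) (anchors : Fin M → X × U)
    (ε : ℝ) (hε : 0 < ε)
    (hfill : fillDist Zt (Finset.image anchors Finset.univ) ≤ ε)
    (κ : X × U → X × U → ℝ) (hκ : IsStrictlyPDKernel κ)
    (x0 : X) (N : ℕ) (hN : M * (Td + 1) ≤ N)
    (ustar : ℕ → U)
    (hopt : ∀ u : ℕ → U,
      (1 / (M : ℝ)) * ∑ i, postVar κ (dataset f x0 ustar N) (anchors i) ≤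
        (1 / (M : ℝ)) * ∑ i, postVar κ (dataset f x0 u N) (anchors i)) :
    (∀ i, anchors i ∈ dataset f x0 ustar N) ∧
      fillDist Zt (dataset f x0 ustar N) ≤ ε :=
  statement0_general f Td hctrl Zt hZt_cpt hM anchors ε hfill κ hκ x0 N hN ustar hopt
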